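/- In the twisted CDO on ℙ¹, under the map e ↦ ∂_x, h ↦ −2(∂_x)₍₋₁₎x + λ*, f ↦ −(∂_x)₍₋₁₎x² − 2∂(x) + x₍₋₁₎λ*, the Sugawara-type central element T = e₍₋₁₎f + f₍₋₁₎e + (1/2)h₍₋₁₎h of V_{−2}(sl₂) maps to (1/2)λ*₍₋₁₎λ* − ∂(λ*) in the commutative vertex algebra H_{ℙ¹} = ℂ[λ*, ∂λ*, ...]. -/

import Mathlib

/-! Each pair of generators has a free-field OPE `a(z) b(w) ∼ r / (z - w)`. For such pairs
the Borcherds identity yields the commutator formula, the expansion of `(a₍₋₁₎b)₍ₖ₎c`, and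
skew-symmetry; these rewrite every summand of `T` in terms of the normally ordered monomials
`x₍₋₁₎(∂ₓ₍₋₁₎(∂ₓ₍₋₁₎x))`, `x₍₋₂₎∂ₓ`, `∂(∂ₓ₍₋₁₎x)`, `x₍₋₁₎(∂ₓ₍₋₁₎λ*)`, `λ*₍₋₁₎λ*`, `∂λ*`,
and all of them cancel except `½ λ*₍₋₁₎λ* - ∂λ*`. -/

/-- Generalized binomial coefficient `C(m, j)` for an integer `m` and natural `j`. -/
def zchoose (m : ℤ) (j : ℕ) : ℤ := (∏ i ∈ Finset.range j, (m - i)) / (j.factorial : ℤ)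

/-- A (ℤ-graded-style) vertex algebra over `ℂ`: a vector space with `n`-th products
`a ₍ₙ₎ b`, a vacuum vector satisfying the vacuum axioms, locality (fields), and the
Borcherds identity. -/
structure VertexAlgebraC (V : Type*) [AddCommGroup V] [Module ℂ V] where
  nprod : V → ℤ → V → V
  vac : V
  nprod_add_left : ∀ a n b c, nprod (a + b) n c = nprod a n c + nprod b n c
  nprod_add_right : ∀ a n b c, nprod a n (b + c) = nprod a n b + nprod a n c
  nprod_smul_left : ∀ (r : ℂ) a n b, nprod (r • a) n b = r • nprod a n b
  nprod_smul_right : ∀ (r : ℂ) a n b, nprod a n (r • b) = r • nprod a n b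
  locality : ∀ a b, ∃ N : ℕ, ∀ n : ℤ, (N : ℤ) ≤ n → nprod a n b = 0
  vac_prod : ∀ (n : ℤ) (a : V), nprod vac n a = if n = -1 then a else 0
  prod_vac_neg_one : ∀ a, nprod a (-1) vac = a
  prod_vac_nonneg : ∀ (a : V) (n : ℤ), 0 ≤ n → nprod a n vac = 0
  borcherds : ∀ (a b c : V) (m n k : ℤ),
    (∑ᶠ j : ℕ, zchoose m j • nprod (nprod a (n + j) b) (m + k - j) c)
      = ∑ᶠ j : ℕ, ((-1 : ℤ) ^ j * zchoose n j) •
          (nprod a (m + n - j) (nprod b (k + j) c)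
            - (Int.negOnePow n : ℤ) • nprod b (n + k - j) (nprod a (m + j) c))

/-- The translation operator `∂a = a₍₋₂₎|0⟩` of a vertex algebra. -/
def VertexAlgebraC.tr {V : Type*} [AddCommGroup V] [Module ℂ V]
    (W : VertexAlgebraC V) (a : V) : V := W.nprod a (-2) W.vac

lemma zchoose_zero_right (m : ℤ) : zchoose m 0 = 1 := by
  simp [zchoose]

lemma zchoose_zero_left {j : ℕ} (hj : 1 ≤ j) : zchoose 0 j = 0 := by
  rw [zchoose, Finset.prod_eq_zero (i := 0) (by simp; omega) (by simp), Int.zero_ediv]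

lemma zchoose_neg_one_left (j : ℕ) : zchoose (-1) j = (-1) ^ j := by
  have hprod : ∏ i ∈ Finset.range j, ((-1 : ℤ) - i) = (-1) ^ j * j.factorial := by
    induction j with
    | zero => simp
    | succ n ih =>
      rw [Finset.prod_range_succ, ih, Nat.factorial_succ]
      push_cast
      ring
  rw [zchoose, hprod, Int.mul_ediv_cancel _ (mod_cast j.factorial_ne_zero)]

namespace VertexAlgebraC

variable {V : Type*} [AddCommGroup V] [Module ℂ V] (W : VertexAlgebraC V)

lemma nprod_zero_left (n : ℤ) (c : V) : W.nprod 0 n c = 0 := by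
  simpa using W.nprod_smul_left 0 0 n c

lemma nprod_zero_right (a : V) (n : ℤ) : W.nprod a n 0 = 0 := by
  simpa using W.nprod_smul_right 0 a n 0

lemma nprod_neg_left (a : V) (n : ℤ) (c : V) : W.nprod (-a) n c = -W.nprod a n c := by
  simpa using W.nprod_smul_left (-1) a n c

lemma nprod_neg_right (a : V) (n : ℤ) (c : V) : W.nprod a n (-c) = -W.nprod a n c := by
  simpa using W.nprod_smul_right (-1) a n c

lemma nprod_sub_left (a b : V) (n : ℤ) (c : V) :
    W.nprod (a - b) n c = W.nprod a n c - W.nprod b n c := by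
  rw [sub_eq_add_neg, W.nprod_add_left, W.nprod_neg_left, sub_eq_add_neg]

lemma nprod_sub_right (a : V) (n : ℤ) (b c : V) :
    W.nprod a n (b - c) = W.nprod a n b - W.nprod a n c := by
  rw [sub_eq_add_neg, W.nprod_add_right, W.nprod_neg_right, sub_eq_add_neg]

lemma vac_nprod_of_ne {n : ℤ} (hn : n ≠ -1) (a : V) : W.nprod W.vac n a = 0 := by
  rw [W.vac_prod, if_neg hn]

lemma vac_nprod_neg_one (a : V) : W.nprod W.vac (-1) a = a := by
  rw [W.vac_prod, if_pos rfl]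

lemma borcherds_sum_range (a b c : V) (m n k : ℤ) (N₁ N₂ : ℕ)
    (h₁ : ∀ j : ℕ, N₁ ≤ j → zchoose m j • W.nprod (W.nprod a (n + j) b) (m + k - j) c = 0)
    (h₂ : ∀ j : ℕ, N₂ ≤ j → ((-1 : ℤ) ^ j * zchoose n j) •
          (W.nprod a (m + n - j) (W.nprod b (k + j) c)
            - (Int.negOnePow n : ℤ) • W.nprod b (n + k - j) (W.nprod a (m + j) c)) = 0) :
    ∑ j ∈ Finset.range N₁, zchoose m j • W.nprod (W.nprod a (n + j) b) (m + k - j) c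
      = ∑ j ∈ Finset.range N₂, ((-1 : ℤ) ^ j * zchoose n j) •
          (W.nprod a (m + n - j) (W.nprod b (k + j) c)
            - (Int.negOnePow n : ℤ) • W.nprod b (n + k - j) (W.nprod a (m + j) c)) := by
  have hsupp : ∀ {f : ℕ → V} {N : ℕ}, (∀ j, N ≤ j → f j = 0) →
      Function.support f ⊆ ↑(Finset.range N) := fun hf j hj => by
    simp only [Finset.coe_range, Set.mem_Iio]
    by_contra hN
    exact hj (hf j (by omega))
  rw [← finsum_eq_sum_of_support_subset _ (hsupp h₁),
    ← finsum_eq_sum_of_support_subset _ (hsupp h₂)]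
  exact W.borcherds a b c m n k

lemma commutator_formula (a b c : V) (m k : ℤ) (N : ℕ)
    (h : ∀ j : ℕ, N ≤ j → W.nprod a j b = 0) :
    W.nprod a m (W.nprod b k c) = W.nprod b k (W.nprod a m c)
      + ∑ j ∈ Finset.range N, zchoose m j • W.nprod (W.nprod a j b) (m + k - j) c := by
  have hb := W.borcherds_sum_range a b c m 0 k N 1
    (fun j hj => by rw [zero_add, h j hj, W.nprod_zero_left, smul_zero])
    (fun j hj => by rw [zchoose_zero_left hj, mul_zero, zero_smul])
  simp only [zero_add, Finset.sum_range_one, Nat.cast_zero, pow_zero, zchoose_zero_right,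
    one_mul, add_zero, sub_zero, Int.negOnePow_zero, Units.val_one, one_smul] at hb
  rw [hb]
  abel

lemma nprod_neg_one_nprod (a b c : V) (k : ℤ) (N : ℕ)
    (ha : ∀ j : ℕ, N ≤ j → W.nprod a j c = 0) (hb : ∀ j : ℕ, N ≤ j → W.nprod b (k + j) c = 0) :
    W.nprod (W.nprod a (-1) b) k c
      = ∑ j ∈ Finset.range N, (W.nprod a (-1 - j) (W.nprod b (k + j) c)
          + W.nprod b (k - 1 - j) (W.nprod a j c)) := by
  have hsign : ∀ j : ℕ, (-1 : ℤ) ^ j * zchoose (-1) j = 1 := fun j => by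
    rw [zchoose_neg_one_left, ← mul_pow, neg_mul_neg, one_mul, one_pow]
  have hb := W.borcherds_sum_range a b c 0 (-1) k 1 N
    (fun j hj => by rw [zchoose_zero_left hj, zero_smul])
    (fun j hj => by rw [hb j hj, W.nprod_zero_right, zero_add, ha j hj, W.nprod_zero_right,
      smul_zero, sub_self, smul_zero])
  simp only [Finset.sum_range_one, Nat.cast_zero, zchoose_zero_right, one_smul, add_zero,
    sub_zero, zero_add, hsign, Int.negOnePow_neg, Int.negOnePow_one, Units.val_neg,
    Units.val_one, neg_smul, sub_neg_eq_add] at hb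
  rw [hb]
  refine Finset.sum_congr rfl fun j _ => ?_
  rw [show -1 + k - (j : ℤ) = k - 1 - j by ring]

/-- Skew-symmetry; the correction terms `(a₍ₙ₊ⱼ₎b)₍₋₂₋ⱼ₎|0⟩` are the divided powers
`∂ʲ⁺¹(a₍ₙ₊ⱼ₎b) / (j + 1)!`. -/
lemma skew_symmetry (a b : V) (n : ℤ) (N : ℕ) (h : ∀ j : ℕ, N ≤ j → W.nprod a (n + j) b = 0) :
    W.nprod b (n - 1) a = (n.negOnePow : ℤ) • (W.nprod a (n - 1) b
      - ∑ j ∈ Finset.range N, (-1 : ℤ) ^ j • W.nprod (W.nprod a (n + j) b) (-2 - j) W.vac) := by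
  have hb := W.borcherds_sum_range a b W.vac (-1) n (-1) N 1
    (fun j hj => by rw [h j hj, W.nprod_zero_left, smul_zero])
    (fun j hj => by rw [W.prod_vac_nonneg b _ (by omega), W.prod_vac_nonneg a _ (by omega),
      W.nprod_zero_right, W.nprod_zero_right, smul_zero, sub_zero, smul_zero])
  simp only [Finset.sum_range_one, Nat.cast_zero, pow_zero, zchoose_zero_right, one_mul,
    one_smul, sub_zero, add_zero, zchoose_neg_one_left, W.prod_vac_neg_one] at hb
  have hsq : ((n.negOnePow : ℤ) * n.negOnePow) = 1 := by
    rw [← Units.val_mul, Int.units_mul_self, Units.val_one]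
  rw [show -1 + n = n - 1 by ring, show n + -1 = n - 1 by ring] at hb
  have hsum : ∀ j : ℕ, (-1 : ℤ) + -1 - j = -2 - j := fun j => by ring
  simp only [hsum] at hb
  rw [hb, sub_sub_cancel, smul_smul, hsq, one_smul]

lemma tr_nprod_neg_one (a c : V) : W.nprod (W.tr a) (-1) c = W.nprod a (-2) c := by
  have hb := W.borcherds_sum_range a W.vac c 0 (-2) (-1) 1 1
    (fun j hj => by rw [zchoose_zero_left hj, zero_smul])
    (fun j hj => by rw [W.vac_nprod_of_ne (by omega), W.nprod_zero_right,
      W.vac_nprod_of_ne (by omega), smul_zero, sub_zero, smul_zero])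
  simp only [Finset.sum_range_one, Nat.cast_zero, zchoose_zero_right, one_smul, add_zero,
    zero_add, sub_zero, pow_zero, one_mul, W.vac_nprod_neg_one] at hb
  rw [tr, hb, W.vac_nprod_of_ne (by norm_num), smul_zero, sub_zero]

/-- The operator product expansion `a(z) b(w) ∼ r / (z - w)`. -/
structure SimplePoleOPE (a b : V) (r : ℂ) : Prop where
  nprod_zero : W.nprod a 0 b = r • W.vac
  nprod_of_pos : ∀ n : ℤ, 1 ≤ n → W.nprod a n b = 0

namespace SimplePoleOPE

variable {W} {a b c : V} {r s : ℂ}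

lemma of_nprod_nonneg (h : ∀ n : ℤ, 0 ≤ n → W.nprod a n b = 0) : W.SimplePoleOPE a b 0 :=
  ⟨by rw [h 0 le_rfl, zero_smul], fun n hn => h n (by omega)⟩

lemma nprod_of_nonneg (H : W.SimplePoleOPE a b 0) {n : ℤ} (hn : 0 ≤ n) : W.nprod a n b = 0 := by
  rcases hn.eq_or_lt with rfl | hn
  · rw [H.nprod_zero, zero_smul]
  · exact H.nprod_of_pos n hn

lemma nprod_nprod (H : W.SimplePoleOPE a b r) (m k : ℤ) (c : V) :
    W.nprod a m (W.nprod b k c) = W.nprod b k (W.nprod a m c)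
      + if m + k = -1 then r • c else 0 := by
  rw [W.commutator_formula a b c m k 1 fun j hj => H.nprod_of_pos j (by omega)]
  simp only [Finset.sum_range_one, Nat.cast_zero, zchoose_zero_right, one_smul, sub_zero,
    H.nprod_zero, W.nprod_smul_left, W.vac_prod]
  split_ifs <;> simp

lemma symm (H : W.SimplePoleOPE a b r) : W.SimplePoleOPE b a (-r) := by
  have hskew := fun n : ℤ => W.skew_symmetry a b (n + 1) 0
  simp only [Finset.range_zero, Finset.sum_empty, sub_zero, add_sub_cancel_right] at hskew
  refine ⟨?_, fun n hn => ?_⟩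
  · rw [hskew 0 fun j _ => H.nprod_of_pos _ (by omega), H.nprod_zero]
    simp
  · rw [hskew n fun j _ => H.nprod_of_pos _ (by omega), H.nprod_of_pos n hn, smul_zero]

lemma nprod_neg_one_comm (H : W.SimplePoleOPE a b r) : W.nprod b (-1) a = W.nprod a (-1) b := by
  have hskew := W.skew_symmetry a b 0 1 fun j hj => H.nprod_of_pos _ (by omega)
  norm_num [H.nprod_zero, W.nprod_smul_left] at hskew
  rwa [W.vac_nprod_of_ne (by norm_num), smul_zero, sub_zero] at hskew

lemma tr_nprod_neg_one_eq_add (H : W.SimplePoleOPE a b r) :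
    W.tr (W.nprod a (-1) b) = W.nprod a (-2) b + W.nprod b (-2) a := by
  have hskew := W.skew_symmetry a b (-1) 2 fun j hj => H.nprod_of_pos _ (by omega)
  norm_num [Finset.sum_range_succ, H.nprod_zero, W.nprod_smul_left] at hskew
  rw [W.vac_nprod_of_ne (by norm_num), smul_zero, neg_zero, add_zero] at hskew
  rw [tr, hskew]
  abel

lemma nprod_neg_one_nprod_of_pos (Ha : W.SimplePoleOPE a c r) (Hb : W.SimplePoleOPE b c s)
    {k : ℤ} (hk : 1 ≤ k) : W.nprod (W.nprod a (-1) b) k c = 0 := by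
  rw [W.nprod_neg_one_nprod a b c k 1 (fun j hj => Ha.nprod_of_pos j (by omega))
    (fun j _ => Hb.nprod_of_pos _ (by omega))]
  simp [Hb.nprod_of_pos k hk, Ha.nprod_zero, W.nprod_smul_right,
    W.prod_vac_nonneg b (k - 1) (by omega), W.nprod_zero_right]

lemma nprod_neg_one_nprod_zero (Ha : W.SimplePoleOPE a c r) (Hb : W.SimplePoleOPE b c s) :
    W.nprod (W.nprod a (-1) b) 0 c = s • a + r • b := by
  rw [W.nprod_neg_one_nprod a b c 0 1 (fun j hj => Ha.nprod_of_pos j (by omega))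
    (fun j hj => Hb.nprod_of_pos _ (by omega))]
  simp [Hb.nprod_zero, Ha.nprod_zero, W.nprod_smul_right, W.prod_vac_neg_one]

lemma nprod_neg_one_nprod_neg_one (Ha : W.SimplePoleOPE a c r) (Hb : W.SimplePoleOPE b c s) :
    W.nprod (W.nprod a (-1) b) (-1) c = W.nprod a (-1) (W.nprod b (-1) c) + r • W.tr b
      + s • W.tr a := by
  rw [W.nprod_neg_one_nprod a b c (-1) 2 (fun j hj => Ha.nprod_of_pos j (by omega))
    (fun j hj => Hb.nprod_of_pos _ (by omega))]
  norm_num [Finset.sum_range_succ, Hb.nprod_zero, Ha.nprod_zero, Ha.nprod_of_pos 1 le_rfl,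
    W.nprod_smul_right, W.nprod_zero_right, tr]

end SimplePoleOPE

/-- The relations of the beta-gamma system; for chiral differential operators on `ℂ`,
`β = ∂ₓ` and `γ = x`. -/
structure IsBetaGamma (β γ : V) : Prop where
  βγ : W.SimplePoleOPE β γ 1
  ββ : W.SimplePoleOPE β β 0
  γγ : W.SimplePoleOPE γ γ 0

namespace IsBetaGamma

variable {W} {β γ : V}

lemma nprod_neg_one_nprod_comm (H : W.IsBetaGamma β γ) {k : ℤ} (hk : k ≤ -1) (c : V) :
    W.nprod β (-1) (W.nprod γ k c) = W.nprod γ k (W.nprod β (-1) c) := by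
  rw [H.βγ.nprod_nprod, if_neg (by omega), add_zero]

lemma nprod_neg_one_tr (H : W.IsBetaGamma β γ) :
    W.nprod β (-1) (W.tr γ) = W.nprod γ (-2) β := by
  rw [tr, H.nprod_neg_one_nprod_comm (by norm_num), W.prod_vac_neg_one]

lemma βγ_nprod_neg_one_βγ (H : W.IsBetaGamma β γ) :
    W.nprod (W.nprod β (-1) γ) (-1) (W.nprod β (-1) γ)
      = W.nprod γ (-1) (W.nprod β (-1) (W.nprod β (-1) γ)) + (2 : ℂ) • W.nprod γ (-2) β
        - W.tr (W.nprod β (-1) γ) := by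
  have hβ_zero : W.nprod β 0 (W.nprod β (-1) γ) = β := by
    simp [H.ββ.nprod_nprod, H.βγ.nprod_zero, W.prod_vac_neg_one]
  have hβ_pos : ∀ m : ℤ, 1 ≤ m → W.nprod β m (W.nprod β (-1) γ) = 0 := fun m hm => by
    simp [H.ββ.nprod_nprod, H.βγ.nprod_of_pos m hm, W.nprod_zero_right]
  have hγ_zero : W.nprod γ 0 (W.nprod β (-1) γ) = -γ := by
    simp [H.βγ.symm.nprod_nprod, H.γγ.nprod_of_nonneg le_rfl, W.nprod_zero_right]
  have hγ_pos : ∀ m : ℤ, 1 ≤ m → W.nprod γ m (W.nprod β (-1) γ) = 0 := fun m hm => by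
    simp [H.βγ.symm.nprod_nprod, H.γγ.nprod_of_nonneg (by omega : 0 ≤ m), W.nprod_zero_right,
      show m + -1 ≠ -1 by omega]
  rw [W.nprod_neg_one_nprod β γ _ (-1) 2 (fun j hj => hβ_pos j (by omega))
    (fun j hj => hγ_pos _ (by omega))]
  simp only [Finset.sum_range_succ, Finset.sum_range_zero, zero_add, Nat.cast_zero, Nat.cast_one]
  norm_num [hβ_zero, hγ_zero, hβ_pos 1 le_rfl]
  rw [H.nprod_neg_one_nprod_comm le_rfl, W.nprod_neg_right, W.nprod_zero_right,
    H.βγ.tr_nprod_neg_one_eq_add]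
  module

lemma β_γγ_nprod_neg_one_β (H : W.IsBetaGamma β γ) :
    W.nprod (W.nprod β (-1) (W.nprod γ (-1) γ)) (-1) β
      = W.nprod γ (-1) (W.nprod β (-1) (W.nprod β (-1) γ))
        - (2 : ℂ) • W.tr (W.nprod β (-1) γ) := by
  have hγβ := H.βγ.symm
  have hγγ_pos : ∀ k : ℤ, 1 ≤ k → W.nprod (W.nprod γ (-1) γ) k β = 0 := fun k hk =>
    hγβ.nprod_neg_one_nprod_of_pos hγβ hk
  rw [W.nprod_neg_one_nprod β _ β (-1) 2 (fun j hj => H.ββ.nprod_of_pos j (by omega))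
    (fun j hj => hγγ_pos _ (by omega))]
  simp only [Finset.sum_range_succ, Finset.sum_range_zero, zero_add, Nat.cast_zero, Nat.cast_one]
  norm_num [hγβ.nprod_neg_one_nprod_neg_one hγβ, hγβ.nprod_neg_one_nprod_zero hγβ,
    H.ββ.nprod_of_nonneg, W.nprod_zero_right]
  simp only [H.βγ.nprod_neg_one_comm, W.nprod_add_right, W.nprod_neg_right,
    H.nprod_neg_one_nprod_comm le_rfl, H.nprod_neg_one_tr, H.βγ.tr_nprod_neg_one_eq_add]
  module

end IsBetaGamma

end VertexAlgebraC

open VertexAlgebraC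

theorem twisted_cdo_P1_sugawara_general {V : Type*} [AddCommGroup V] [Module ℂ V]
    (W : VertexAlgebraC V) (x Dx L : V)
    (hbg0 : W.nprod Dx 0 x = W.vac)
    (hbgx : ∀ n : ℤ, 0 ≤ n → W.nprod x n x = 0)
    (hbgD : ∀ n : ℤ, 0 ≤ n → W.nprod Dx n Dx = 0)
    (hbg1 : ∀ n : ℤ, 1 ≤ n → W.nprod Dx n x = 0)
    -- `λ*` generates a commutative vertex algebra commuting with the beta-gamma system:
    (hxL : ∀ n : ℤ, 0 ≤ n → W.nprod x n L = 0)
    (hLD : ∀ n : ℤ, 0 ≤ n → W.nprod L n Dx = 0)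
    (hDL : ∀ n : ℤ, 0 ≤ n → W.nprod Dx n L = 0) :
    let e := Dx
    let h := (-2 : ℂ) • W.nprod Dx (-1) x + L
    let f := - W.nprod Dx (-1) (W.nprod x (-1) x) - (2 : ℂ) • W.tr x
                + W.nprod x (-1) L
    W.nprod e (-1) f + W.nprod f (-1) e + (2⁻¹ : ℂ) • W.nprod h (-1) h
      = (2⁻¹ : ℂ) • W.nprod L (-1) L - W.tr L := by
  have H : W.IsBetaGamma Dx x :=
    ⟨⟨by rw [hbg0, one_smul], hbg1⟩, .of_nprod_nonneg hbgD, .of_nprod_nonneg hbgx⟩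
  have hγL := SimplePoleOPE.of_nprod_nonneg hxL
  have hLβ := SimplePoleOPE.of_nprod_nonneg hLD
  have hβL := SimplePoleOPE.of_nprod_nonneg hDL
  intro e h f
  simp only [e, h, f, nprod_add_left, nprod_add_right, nprod_sub_left, nprod_sub_right,
    nprod_neg_left, nprod_neg_right, nprod_smul_left, nprod_smul_right]
  rw [H.β_γγ_nprod_neg_one_β, H.βγ_nprod_neg_one_βγ, tr_nprod_neg_one, H.nprod_neg_one_tr,
    H.βγ.symm.nprod_neg_one_nprod_neg_one hLβ, hβL.nprod_neg_one_nprod_neg_one hγL,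
    hLβ.nprod_nprod, hγL.nprod_neg_one_comm, hβL.nprod_neg_one_comm]
  simp only [H.nprod_neg_one_nprod_comm le_rfl, zero_smul, ite_self]
  module

/-- In the twisted CDO `D^{ch,tw} = D^{ch} ⊗ H_{ℙ¹}` on `ℙ¹` (the beta-gamma system
tensored with the commutative vertex algebra of differential polynomials in `λ*`), under
the map `e ↦ ∂_x`, `h ↦ −2(∂_x)₍₋₁₎x + λ*`, `f ↦ −(∂_x)₍₋₁₎x² − 2∂(x) + x₍₋₁₎λ*`,
the Sugawara-type central element `T = e₍₋₁₎f + f₍₋₁₎e + (1/2)h₍₋₁₎h` of `V_{−2}(sl₂)`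
maps to `(1/2)λ*₍₋₁₎λ* − ∂(λ*)` in `H_{ℙ¹}`. -/
theorem twisted_cdo_P1_sugawara {V : Type*} [AddCommGroup V] [Module ℂ V]
    (W : VertexAlgebraC V) (x Dx L : V)
    (hbg0 : W.nprod Dx 0 x = W.vac)
    (hbgx : ∀ n : ℤ, 0 ≤ n → W.nprod x n x = 0)
    (hbgD : ∀ n : ℤ, 0 ≤ n → W.nprod Dx n Dx = 0)
    (hbg1 : ∀ n : ℤ, 1 ≤ n → W.nprod Dx n x = 0)
    -- `λ*` generates a commutative vertex algebra commuting with the beta-gamma system: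
    (hLL : ∀ n : ℤ, 0 ≤ n → W.nprod L n L = 0)
    (hLx : ∀ n : ℤ, 0 ≤ n → W.nprod L n x = 0)
    (hxL : ∀ n : ℤ, 0 ≤ n → W.nprod x n L = 0)
    (hLD : ∀ n : ℤ, 0 ≤ n → W.nprod L n Dx = 0)
    (hDL : ∀ n : ℤ, 0 ≤ n → W.nprod Dx n L = 0) :
    let e := Dx
    let h := (-2 : ℂ) • W.nprod Dx (-1) x + L
    let f := - W.nprod Dx (-1) (W.nprod x (-1) x) - (2 : ℂ) • W.tr x
                + W.nprod x (-1) L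
    W.nprod e (-1) f + W.nprod f (-1) e + (2⁻¹ : ℂ) • W.nprod h (-1) h
      = (2⁻¹ : ℂ) • W.nprod L (-1) L - W.tr L :=
  twisted_cdo_P1_sugawara_general W x Dx L hbg0 hbgx hbgD hbg1 hxL hLD hDL
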